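/- For every finite metric voting instance (D, p, q) — a finite metric space D, a candidate probability distribution p, and a voter probability distribution q, in general position (no voter equidistant from two distinct candidates, strict majority winners, no ties in social cost) — the expected distortion of majority voting between two candidates drawn i.i.d. from p satisfies Social(D, p, q) ≤ 2. -/
import Mathlib

open Finset MeasureTheory

/-- A finite metric space on `n` points. -/
structure FinMetric (n : ℕ) where
  d : Fin n → Fin n → ℝ
  refl : ∀ i, d i i = 0
  symm : ∀ i j, d i j = d j i
  pos : ∀ i j, i ≠ j → 0 < d i j
  triangle : ∀ i j k, d i k ≤ d i j + d j k

/-- Social cost of candidate `i`: average distance to the voters,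
distributed according to `q`. -/
noncomputable def mcost {n : ℕ} (M : FinMetric n) (q : Fin n → ℝ) (i : Fin n) : ℝ :=
  ∑ j, q j * M.d i j

/-- Total voter mass strictly preferring candidate `i` over candidate `i'`. -/
noncomputable def mvotes {n : ℕ} (M : FinMetric n) (q : Fin n → ℝ) (i i' : Fin n) : ℝ :=
  ∑ j ∈ Finset.univ.filter (fun j => M.d i j < M.d i' j), q j

/-- The majority winner of the election between candidates `i` and `i'`. -/
noncomputable def mwin {n : ℕ} (M : FinMetric n) (q : Fin n → ℝ) (i i' : Fin n) : Fin n :=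
  if 1/2 < mvotes M q i i' then i else i'

/-- The socially better of the two candidates `i`, `i'`. -/
noncomputable def mopt {n : ℕ} (M : FinMetric n) (q : Fin n → ℝ) (i i' : Fin n) : Fin n :=
  if mcost M q i < mcost M q i' then i else i'

/-- Pairwise distortion of the election between `i` and `i'`. -/
noncomputable def mr {n : ℕ} (M : FinMetric n) (q : Fin n → ℝ) (i i' : Fin n) : ℝ :=
  mcost M q (mwin M q i i') / mcost M q (mopt M q i i')

/-- Expected distortion: two candidates drawn i.i.d. from `p`, voters distributed as `q`. -/
noncomputable def msocial {n : ℕ} (M : FinMetric n) (p q : Fin n → ℝ) : ℝ :=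
  ∑ i, ∑ i', p i * p i' * mr M q i i'

/-- General position: no voter is equidistant from two distinct candidates, every
election has a strict majority winner, and there are no ties in social cost. -/
def MGenPos {n : ℕ} (M : FinMetric n) (q : Fin n → ℝ) : Prop :=
  (∀ j i i' : Fin n, i ≠ i' → M.d i j ≠ M.d i' j) ∧
  (∀ i i' : Fin n, i ≠ i' → mvotes M q i i' ≠ 1/2) ∧
  (∀ i i' : Fin n, i ≠ i' → mcost M q i ≠ mcost M q i')


noncomputable def wfun (x : ℝ) : ℝ := if |x| ≤ 1 then |x| else 0

lemma wfun_nonneg (x : ℝ) : 0 ≤ wfun x := by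
  unfold wfun; split
  · exact abs_nonneg x
  · exact le_refl 0

lemma wfun_comm (x : ℝ) : wfun (-x) = wfun x := by
  unfold wfun; rw [abs_neg]

noncomputable def epsf (a θ : ℝ) : ℝ := if Even ⌊a - θ⌋ then 1 else 0

lemma epsf_meas (a : ℝ) : Measurable (epsf a) := by
  unfold epsf
  refine Measurable.ite ?_ measurable_const measurable_const
  have h : Measurable fun θ : ℝ => ⌊a - θ⌋ := (measurable_const.sub measurable_id).floor
  exact h (MeasurableSet.of_discrete (s := {n : ℤ | Even n}))

lemma epsf_nonneg (a θ : ℝ) : 0 ≤ epsf a θ := by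
  unfold epsf; split <;> norm_num

lemma epsf_le_one (a θ : ℝ) : epsf a θ ≤ 1 := by
  unfold epsf; split <;> norm_num

lemma intable_bdd {f : ℝ → ℝ} (hf : Measurable f) {C : ℝ} (hC : ∀ x, ‖f x‖ ≤ C) (a b : ℝ) :
    IntervalIntegrable f volume a b := by
  apply MeasureTheory.IntegrableOn.intervalIntegrable
  apply MeasureTheory.Measure.integrableOn_of_bounded (M := C)
  · exact (isCompact_uIcc.measure_lt_top).ne
  · exact hf.aestronglyMeasurable
  · exact MeasureTheory.ae_of_all _ hC

lemma fract_int_01 : ∫ u in (0:ℝ)..1, Int.fract u = 1/2 := by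
  have h : ∀ᵐ u ∂(volume : Measure ℝ), u ∈ Set.uIoc (0:ℝ) 1 → Int.fract u = u := by
    have h1 : (volume : Measure ℝ) {(1:ℝ)} = 0 := measure_singleton 1
    filter_upwards [measure_eq_zero_iff_ae_notMem.mp h1] with u hu hmem
    rw [Set.uIoc_of_le zero_le_one] at hmem
    exact Int.fract_eq_self.2 ⟨le_of_lt hmem.1, lt_of_le_of_ne hmem.2 hu⟩
  rw [intervalIntegral.integral_congr_ae (g := fun u => u) ?_]
  · rw [integral_id]; norm_num
  · filter_upwards [h] with u hu hmem
    exact hu hmem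

lemma floor_int (x : ℝ) : ∫ θ in (0:ℝ)..1, (⌊x - θ⌋ : ℝ) = x - 1 := by
  have h1 : (∫ θ in (0:ℝ)..1, (⌊x - θ⌋ : ℝ)) = ∫ u in (x-1)..(x-0), ((⌊u⌋ : ℝ)) :=
    intervalIntegral.integral_comp_sub_left (fun u => ((⌊u⌋ : ℝ))) x
  have h2 : ∀ u : ℝ, ((⌊u⌋ : ℝ)) = u - Int.fract u := by
    intro u; rw [Int.self_sub_fract]
  rw [h1]
  rw [intervalIntegral.integral_congr (g := fun u => u - Int.fract u) (fun u _ => h2 u)]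
  have hfr : IntervalIntegrable Int.fract volume (x-1) (x-0) := by
    apply intable_bdd measurable_fract
    · intro u
      rw [Real.norm_eq_abs, abs_of_nonneg (Int.fract_nonneg u)]
      exact le_of_lt (Int.fract_lt_one u)
  rw [intervalIntegral.integral_sub (intervalIntegral.intervalIntegrable_id) hfr]
  have hper : ∫ u in (x-1)..(x-0), Int.fract u = ∫ u in (0:ℝ)..1, Int.fract u := by
    have := (Int.fract_periodic ℝ).intervalIntegral_add_eq (x-1) 0
    simpa using this
  rw [hper, fract_int_01, integral_id]
  ring

noncomputable def gint (a b θ : ℝ) : ℝ := epsf a θ + epsf b θ - 2 * (epsf a θ * epsf b θ)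

lemma gint_nonneg (a b θ : ℝ) : 0 ≤ gint a b θ := by
  unfold gint epsf
  split <;> split <;> norm_num

lemma gint_abs_le (a b θ : ℝ) : ‖gint a b θ‖ ≤ 2 := by
  rw [Real.norm_eq_abs]
  unfold gint epsf
  split <;> split <;> norm_num

lemma gint_meas (a b : ℝ) : Measurable (gint a b) := by
  unfold gint
  exact ((epsf_meas a).add (epsf_meas b)).sub (measurable_const.mul ((epsf_meas a).mul (epsf_meas b)))

lemma gint_intable (a b : ℝ) : IntervalIntegrable (gint a b) volume 0 1 :=
  intable_bdd (gint_meas a b) (gint_abs_le a b) 0 1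

lemma gint_symm (a b θ : ℝ) : gint b a θ = gint a b θ := by
  unfold gint; ring

lemma pair_bound' (a b : ℝ) (hba : b ≤ a) (h1 : a - b ≤ 1) :
    a - b ≤ ∫ θ in (0:ℝ)..1, gint a b θ := by
  have key : ∀ θ : ℝ, ((⌊a - θ⌋ : ℝ) - (⌊b - θ⌋ : ℝ)) ≤ gint a b θ := by
    intro θ
    have h0 : ⌊b - θ⌋ ≤ ⌊a - θ⌋ := Int.floor_mono (by linarith)
    have h2 : ⌊a - θ⌋ ≤ ⌊b - θ⌋ + 1 := by
      have hle : a - θ ≤ (b - θ) + (1:ℤ) := by push_cast; linarith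
      calc ⌊a - θ⌋ ≤ ⌊(b - θ) + (1:ℤ)⌋ := Int.floor_mono hle
        _ = ⌊b - θ⌋ + 1 := Int.floor_add_intCast _ _
    rcases (by omega : ⌊a - θ⌋ = ⌊b - θ⌋ ∨ ⌊a - θ⌋ = ⌊b - θ⌋ + 1) with he | he
    · rw [he]
      simpa using gint_nonneg a b θ
    · have hpar : Even ⌊a - θ⌋ ↔ ¬ Even ⌊b - θ⌋ := by
        rw [he, Int.even_add_one]
      rw [he]
      push_cast
      unfold gint epsf
      by_cases hb : Even ⌊b - θ⌋
      · rw [if_neg (by rw [hpar]; exact not_not.2 hb), if_pos hb]; norm_num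
      · rw [if_pos (hpar.2 hb), if_neg hb]; norm_num
  have hfa : IntervalIntegrable (fun θ : ℝ => ((⌊a - θ⌋ : ℝ))) volume 0 1 := by
    apply Antitone.intervalIntegrable
    intro x y hxy
    show ((⌊a - y⌋ : ℤ) : ℝ) ≤ ((⌊a - x⌋ : ℤ) : ℝ)
    exact_mod_cast Int.floor_mono (by linarith : a - y ≤ a - x)
  have hfb : IntervalIntegrable (fun θ : ℝ => ((⌊b - θ⌋ : ℝ))) volume 0 1 := by
    apply Antitone.intervalIntegrable
    intro x y hxy
    show ((⌊b - y⌋ : ℤ) : ℝ) ≤ ((⌊b - x⌋ : ℤ) : ℝ)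
    exact_mod_cast Int.floor_mono (by linarith : b - y ≤ b - x)
  have heq : (a - b : ℝ) = ∫ θ in (0:ℝ)..1, (((⌊a - θ⌋ : ℝ)) - ((⌊b - θ⌋ : ℝ))) := by
    rw [intervalIntegral.integral_sub hfa hfb, floor_int, floor_int]
    ring
  rw [heq]
  exact intervalIntegral.integral_mono_on zero_le_one (hfa.sub hfb) (gint_intable a b)
    (fun θ _ => key θ)

lemma pair_bound (a b : ℝ) : wfun (a - b) ≤ ∫ θ in (0:ℝ)..1, gint a b θ := by
  by_cases h : |a - b| ≤ 1
  · rcases le_total b a with hba | hab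
    · have : wfun (a - b) = a - b := by
        unfold wfun; rw [if_pos h, abs_of_nonneg (by linarith)]
      rw [this]
      exact pair_bound' a b hba (le_trans (le_abs_self _) h)
    · have : wfun (a - b) = b - a := by
        unfold wfun; rw [if_pos h, abs_of_nonpos (by linarith)]; ring
      rw [this]
      have hs : (∫ θ in (0:ℝ)..1, gint a b θ) = ∫ θ in (0:ℝ)..1, gint b a θ := by
        apply intervalIntegral.integral_congr
        intro θ _; rw [gint_symm]
      rw [hs]
      exact pair_bound' b a hab (by rw [abs_sub_comm] at h; exact le_trans (le_abs_self _) h)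
  · have : wfun (a - b) = 0 := by unfold wfun; rw [if_neg h]
    rw [this]
    exact intervalIntegral.integral_nonneg zero_le_one (fun θ _ => gint_nonneg a b θ)


lemma intInt_sum {ι} (s : Finset ι) {f : ι → ℝ → ℝ} {a b : ℝ}
    (h : ∀ i ∈ s, IntervalIntegrable (f i) volume a b) :
    IntervalIntegrable (fun θ => ∑ i ∈ s, f i θ) volume a b := by
  have := IntervalIntegrable.sum s h
  rwa [Finset.sum_fn] at this

set_option maxHeartbeats 1000000 in
lemma sumw_le {n : ℕ} (t : Fin n → ℝ) (p : Fin n → ℝ) (hp : ∀ i, 0 ≤ p i)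
    (hpsum : ∑ i, p i = 1) :
    ∑ i, ∑ j, p i * p j * wfun (t i - t j) ≤ 1/2 := by
  have hint : ∀ i j : Fin n, IntervalIntegrable (fun θ => p i * p j * gint (t i) (t j) θ)
      volume 0 1 := fun i j => (gint_intable (t i) (t j)).const_mul _
  have step1 : ∑ i, ∑ j, p i * p j * wfun (t i - t j) ≤
      ∑ i, ∑ j, (p i * p j * ∫ θ in (0:ℝ)..1, gint (t i) (t j) θ) := by
    apply Finset.sum_le_sum; intro i _
    apply Finset.sum_le_sum; intro j _
    exact mul_le_mul_of_nonneg_left (pair_bound (t i) (t j))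
      (mul_nonneg (hp i) (hp j))
  have step2 : (∫ θ in (0:ℝ)..1, ∑ i, ∑ j, p i * p j * gint (t i) (t j) θ) =
      ∑ i, ∑ j, (p i * p j * ∫ θ in (0:ℝ)..1, gint (t i) (t j) θ) := by
    rw [intervalIntegral.integral_finset_sum (μ := volume) (a := (0:ℝ)) (b := (1:ℝ))
      (s := Finset.univ) (f := fun i θ => ∑ j, p i * p j * gint (t i) (t j) θ)
      (fun i _ => intInt_sum _ (fun j _ => hint i j))]
    apply Finset.sum_congr rfl
    intro i _
    rw [intervalIntegral.integral_finset_sum (μ := volume) (a := (0:ℝ)) (b := (1:ℝ))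
      (s := Finset.univ) (f := fun j θ => p i * p j * gint (t i) (t j) θ)
      (fun j _ => hint i j)]
    apply Finset.sum_congr rfl
    intro j _
    rw [intervalIntegral.integral_const_mul]
  have hpt : ∀ θ : ℝ, ∑ i, ∑ j, p i * p j * gint (t i) (t j) θ ≤ 1/2 := by
    intro θ
    set A := ∑ i, p i * epsf (t i) θ with hA
    have e1 : ∀ i j : Fin n, p i * p j * gint (t i) (t j) θ =
        (p i * epsf (t i) θ) * p j + p i * (p j * epsf (t j) θ)
          - 2 * ((p i * epsf (t i) θ) * (p j * epsf (t j) θ)) := by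
      intro i j; unfold gint; ring
    have inner : ∀ i : Fin n, ∑ j, p i * p j * gint (t i) (t j) θ =
        (p i * epsf (t i) θ) + p i * A - (p i * epsf (t i) θ) * (2 * A) := by
      intro i
      simp only [e1]
      rw [Finset.sum_sub_distrib, Finset.sum_add_distrib, ← Finset.mul_sum, ← Finset.mul_sum,
        ← Finset.mul_sum, ← Finset.mul_sum, hpsum, ← hA]
      ring
    have total : ∑ i, ∑ j, p i * p j * gint (t i) (t j) θ = 2*A - 2*A^2 := by
      simp only [inner]
      rw [Finset.sum_sub_distrib, Finset.sum_add_distrib, ← Finset.sum_mul, ← Finset.sum_mul,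
        hpsum, ← hA]
      ring
    rw [total]
    nlinarith [sq_nonneg (A - 1/2)]
  have step3 : (∫ θ in (0:ℝ)..1, ∑ i, ∑ j, p i * p j * gint (t i) (t j) θ) ≤ 1/2 := by
    have hbig : IntervalIntegrable (fun θ => ∑ i, ∑ j, p i * p j * gint (t i) (t j) θ)
        volume 0 1 :=
      intInt_sum _ (fun i _ => intInt_sum _ (fun j _ => hint i j))
    calc (∫ θ in (0:ℝ)..1, ∑ i, ∑ j, p i * p j * gint (t i) (t j) θ)
        ≤ ∫ _ in (0:ℝ)..1, (1/2 : ℝ) :=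
          intervalIntegral.integral_mono_on zero_le_one hbig intervalIntegrable_const
            (fun θ _ => hpt θ)
      _ = 1/2 := by simp
  calc ∑ i, ∑ j, p i * p j * wfun (t i - t j)
      ≤ ∑ i, ∑ j, (p i * p j * ∫ θ in (0:ℝ)..1, gint (t i) (t j) θ) := step1
    _ = ∫ θ in (0:ℝ)..1, ∑ i, ∑ j, p i * p j * gint (t i) (t j) θ := step2.symm
    _ ≤ 1/2 := step3


lemma d_nonneg {n : ℕ} (M : FinMetric n) (i j : Fin n) : 0 ≤ M.d i j := by
  rcases eq_or_ne i j with h | h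
  · rw [h, M.refl]
  · exact le_of_lt (M.pos i j h)

lemma mcost_nonneg {n : ℕ} (M : FinMetric n) {q : Fin n → ℝ} (hq : ∀ i, 0 ≤ q i) (i : Fin n) :
    0 ≤ mcost M q i :=
  Finset.sum_nonneg (fun j _ => mul_nonneg (hq j) (d_nonneg M i j))

lemma votes_compl {n : ℕ} (M : FinMetric n) (q : Fin n → ℝ) (hqsum : ∑ i, q i = 1)
    {i i' : Fin n} (hsep : ∀ j, M.d i j ≠ M.d i' j) :
    mvotes M q i i' + mvotes M q i' i = 1 := by
  unfold mvotes
  have hfe : Finset.univ.filter (fun j => M.d i' j < M.d i j) =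
      Finset.univ.filter (fun j => ¬ M.d i j < M.d i' j) := by
    apply Finset.filter_congr
    intro j _
    constructor
    · intro h; exact not_lt.2 (le_of_lt h)
    · intro h; exact lt_of_le_of_ne (not_lt.1 h) (hsep j).symm
  rw [hfe, Finset.sum_filter_add_sum_filter_not]
  exact hqsum

lemma maj_cost {n : ℕ} (M : FinMetric n) {q : Fin n → ℝ} (hq : ∀ i, 0 ≤ q i)
    (hqsum : ∑ i, q i = 1) {w l : Fin n} (hne : w ≠ l)
    (hmaj : 1/2 < mvotes M q w l) :
    0 < mcost M q l ∧ mcost M q w ≤ 3 * mcost M q l := by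
  classical
  set S := Finset.univ.filter (fun j => M.d w j < M.d l j) with hS
  set a := ∑ j ∈ S, q j with ha
  have hmaj' : 1/2 < a := hmaj
  have hd : 0 < M.d w l := M.pos w l hne
  -- voter masses
  have hsplit : a + ∑ j ∈ Finset.univ.filter (fun j => ¬ M.d w j < M.d l j), q j = 1 := by
    rw [ha, hS, Finset.sum_filter_add_sum_filter_not]; exact hqsum
  -- cost splits
  have hcw : mcost M q w = (∑ j ∈ S, q j * M.d w j) +
      ∑ j ∈ Finset.univ.filter (fun j => ¬ M.d w j < M.d l j), q j * M.d w j := by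
    rw [hS]; exact (Finset.sum_filter_add_sum_filter_not _ _ _).symm
  have hcl : mcost M q l = (∑ j ∈ S, q j * M.d l j) +
      ∑ j ∈ Finset.univ.filter (fun j => ¬ M.d w j < M.d l j), q j * M.d l j := by
    rw [hS]; exact (Finset.sum_filter_add_sum_filter_not _ _ _).symm
  have f1 : ∑ j ∈ S, q j * M.d w j ≤ ∑ j ∈ S, q j * M.d l j := by
    apply Finset.sum_le_sum
    intro j hj
    have := (Finset.mem_filter.1 hj).2
    exact mul_le_mul_of_nonneg_left (le_of_lt this) (hq j)
  have f2 : ∑ j ∈ Finset.univ.filter (fun j => ¬ M.d w j < M.d l j), q j * M.d w j ≤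
      (∑ j ∈ Finset.univ.filter (fun j => ¬ M.d w j < M.d l j), q j) * M.d w l +
      ∑ j ∈ Finset.univ.filter (fun j => ¬ M.d w j < M.d l j), q j * M.d l j := by
    rw [Finset.sum_mul, ← Finset.sum_add_distrib]
    apply Finset.sum_le_sum
    intro j _
    have htr : M.d w j ≤ M.d w l + M.d l j := M.triangle w l j
    calc q j * M.d w j ≤ q j * (M.d w l + M.d l j) :=
          mul_le_mul_of_nonneg_left htr (hq j)
      _ = q j * M.d w l + q j * M.d l j := by ring
  have f6 : a * M.d w l ≤ 2 * ∑ j ∈ S, q j * M.d l j := by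
    rw [ha, Finset.sum_mul, Finset.mul_sum]
    apply Finset.sum_le_sum
    intro j hj
    have hjlt : M.d w j < M.d l j := (Finset.mem_filter.1 hj).2
    have htr : M.d w l ≤ M.d w j + M.d j l := M.triangle w j l
    have hsym : M.d j l = M.d l j := M.symm j l
    have : M.d w l ≤ 2 * M.d l j := by rw [hsym] at htr; linarith
    calc q j * M.d w l ≤ q j * (2 * M.d l j) := mul_le_mul_of_nonneg_left this (hq j)
      _ = 2 * (q j * M.d l j) := by ring
  have f7 : ∑ j ∈ S, q j * M.d l j ≤ mcost M q l := by
    rw [hcl]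
    have : (0:ℝ) ≤ ∑ j ∈ Finset.univ.filter (fun j => ¬ M.d w j < M.d l j), q j * M.d l j :=
      Finset.sum_nonneg (fun j _ => mul_nonneg (hq j) (d_nonneg M l j))
    linarith
  have hadl : a * M.d w l ≤ 2 * mcost M q l := by linarith
  have hhalf : (1/2) * M.d w l ≤ a * M.d w l :=
    mul_le_mul_of_nonneg_right (le_of_lt hmaj') (le_of_lt hd)
  have hclpos : 0 < mcost M q l := by nlinarith
  constructor
  · exact hclpos
  · -- cost w ≤ cost l + (1-a) d ≤ cost l + (1/2) d ≤ cost l + 2 cost l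
    have h1a : ∑ j ∈ Finset.univ.filter (fun j => ¬ M.d w j < M.d l j), q j = 1 - a := by
      linarith
    have hcwle : mcost M q w ≤ mcost M q l + (1 - a) * M.d w l := by
      rw [hcw, hcl, ← h1a]
      linarith [f1, f2]
    have h2 : (1 - a) * M.d w l ≤ (1/2) * M.d w l :=
      mul_le_mul_of_nonneg_right (by linarith) (le_of_lt hd)
    linarith

noncomputable def tfun {n : ℕ} (M : FinMetric n) (q : Fin n → ℝ) (i : Fin n) : ℝ :=
  Real.log (mcost M q i) / Real.log 3

lemma exp_bound {x : ℝ} (h0 : 0 ≤ x) (h1 : x ≤ 1) :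
    Real.exp (x * Real.log 3) ≤ 1 + 2 * x := by
  have hc := convexOn_exp.2 (Set.mem_univ (0:ℝ)) (Set.mem_univ (Real.log 3))
    (by linarith : (0:ℝ) ≤ 1 - x) h0 (by ring)
  simp only [smul_eq_mul, mul_zero, zero_add, Real.exp_zero, mul_one] at hc
  rw [Real.exp_log (by norm_num : (0:ℝ) < 3)] at hc
  linarith

lemma core_ratio {n : ℕ} (M : FinMetric n) {q : Fin n → ℝ} (hq : ∀ i, 0 ≤ q i)
    (hqsum : ∑ i, q i = 1) {w l : Fin n} (hne : w ≠ l)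
    (hmaj : 1/2 < mvotes M q w l) (hlt : mcost M q l < mcost M q w) :
    mcost M q w / mcost M q l ≤ 1 + 2 * wfun (tfun M q w - tfun M q l) := by
  obtain ⟨hlp, h3⟩ := maj_cost M hq hqsum hne hmaj
  have hwp : 0 < mcost M q w := lt_trans hlp hlt
  have hL : 0 < Real.log 3 := Real.log_pos (by norm_num)
  set x := (Real.log (mcost M q w) - Real.log (mcost M q l)) / Real.log 3 with hx
  have htx : tfun M q w - tfun M q l = x := by
    unfold tfun; rw [div_sub_div_same]
  have hlog_le : Real.log (mcost M q l) ≤ Real.log (mcost M q w) :=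
    Real.log_le_log hlp (le_of_lt hlt)
  have hx0 : 0 ≤ x := div_nonneg (by linarith) (le_of_lt hL)
  have hx1 : x ≤ 1 := by
    rw [hx, div_le_one hL]
    have hlog : Real.log (mcost M q w) ≤ Real.log (3 * mcost M q l) :=
      Real.log_le_log hwp h3
    rw [Real.log_mul (by norm_num) (ne_of_gt hlp)] at hlog
    linarith
  have hwfun : wfun (tfun M q w - tfun M q l) = x := by
    rw [htx]; unfold wfun
    rw [abs_of_nonneg hx0, if_pos hx1]
  rw [hwfun]
  have hcwx : mcost M q w / mcost M q l = Real.exp (x * Real.log 3) := by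
    rw [hx, div_mul_cancel₀ _ (ne_of_gt hL),
      ← Real.log_div (ne_of_gt hwp) (ne_of_gt hlp),
      Real.exp_log (div_pos hwp hlp)]
  rw [hcwx]
  exact exp_bound hx0 hx1

lemma pair_mr {n : ℕ} (M : FinMetric n) {q : Fin n → ℝ} (hq : ∀ i, 0 ≤ q i)
    (hqsum : ∑ i, q i = 1) (hgen : MGenPos M q) (i i' : Fin n) :
    mr M q i i' ≤ 1 + 2 * wfun (tfun M q i - tfun M q i') := by
  have hw0 : 0 ≤ wfun (tfun M q i - tfun M q i') := wfun_nonneg _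
  rcases eq_or_ne i i' with rfl | hii
  · have hwin : mwin M q i i = i := by unfold mwin; split <;> rfl
    have hopt : mopt M q i i = i := by unfold mopt; split <;> rfl
    unfold mr; rw [hwin, hopt]
    rcases eq_or_ne (mcost M q i) 0 with h0 | h0
    · rw [h0, div_zero]; linarith
    · rw [div_self h0]; linarith
  · by_cases hWO : mwin M q i i' = mopt M q i i'
    · unfold mr; rw [hWO]
      rcases eq_or_ne (mcost M q (mopt M q i i')) 0 with h0 | h0
      · rw [h0, div_zero]; linarith
      · rw [div_self h0]; linarith
    · by_cases hv : 1/2 < mvotes M q i i'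
      · have hwin : mwin M q i i' = i := if_pos hv
        have hlt : mcost M q i' < mcost M q i := by
          by_cases hc : mcost M q i < mcost M q i'
          · exfalso; apply hWO
            rw [hwin]; unfold mopt; rw [if_pos hc]
          · exact lt_of_le_of_ne (not_lt.1 hc) (hgen.2.2 i' i (Ne.symm hii))
        have hopt : mopt M q i i' = i' := by
          unfold mopt; rw [if_neg (not_lt.2 (le_of_lt hlt))]
        unfold mr; rw [hwin, hopt]
        exact core_ratio M hq hqsum hii hv hlt
      · have hwin : mwin M q i i' = i' := if_neg hv
        have hv' : 1/2 < mvotes M q i' i := by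
          have hsum := votes_compl M q hqsum (fun j => hgen.1 j i i' hii)
          have hne2 : mvotes M q i i' ≠ 1/2 := hgen.2.1 i i' hii
          have hlt2 : mvotes M q i i' < 1/2 := lt_of_le_of_ne (not_lt.1 hv) hne2
          linarith
        have hlt : mcost M q i < mcost M q i' := by
          by_cases hc : mcost M q i < mcost M q i'
          · exact hc
          · exfalso; apply hWO
            rw [hwin]; unfold mopt; rw [if_neg hc]
        have hopt : mopt M q i i' = i := by
          unfold mopt; rw [if_pos hlt]
        unfold mr; rw [hwin, hopt]
        have hres := core_ratio M hq hqsum (Ne.symm hii) hv' hlt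
        rw [show tfun M q i' - tfun M q i = -(tfun M q i - tfun M q i') by ring,
          wfun_comm] at hres
        exact hres


/-- for every finite metric voting instance `(D, p, q)` in general
position, the expected distortion of majority voting between two candidates drawn
i.i.d. from `p` is at most 2. -/
theorem metric_distortion_le_two (n : ℕ) (M : FinMetric n) (p q : Fin n → ℝ)
    (hp : ∀ i, 0 ≤ p i) (hpsum : ∑ i, p i = 1)
    (hq : ∀ i, 0 ≤ q i) (hqsum : ∑ i, q i = 1)
    (hgen : MGenPos M q) :
    msocial M p q ≤ 2 := by
  have step1 : msocial M p q ≤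
      ∑ i, ∑ i', p i * p i' * (1 + 2 * wfun (tfun M q i - tfun M q i')) := by
    unfold msocial
    apply Finset.sum_le_sum; intro i _
    apply Finset.sum_le_sum; intro i' _
    exact mul_le_mul_of_nonneg_left (pair_mr M hq hqsum hgen i i')
      (mul_nonneg (hp i) (hp i'))
  have expand : ∑ i, ∑ i', p i * p i' * (1 + 2 * wfun (tfun M q i - tfun M q i')) =
      (∑ i, ∑ i', p i * p i') +
        2 * ∑ i, ∑ i', p i * p i' * wfun (tfun M q i - tfun M q i') := by
    have e : ∀ i i' : Fin n, p i * p i' * (1 + 2 * wfun (tfun M q i - tfun M q i')) =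
        p i * p i' + 2 * (p i * p i' * wfun (tfun M q i - tfun M q i')) := by
      intro i i'; ring
    simp only [e, Finset.sum_add_distrib, ← Finset.mul_sum]
  have hdiag : ∑ i, ∑ i' : Fin n, p i * p i' = 1 := by
    rw [← Finset.sum_mul_sum, hpsum, mul_one]
  have hG := sumw_le (tfun M q) p hp hpsum
  rw [expand, hdiag] at step1
  linarith
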